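/- For every integer l ≥ 0, every integer j ≥ 1, every σ > 0, and every κ ∈ ℂ with Re κ > 0: (1/2π) ∫_ℝ 1/((σ+iξ)(σ−iξ)(κ+iξ)^j) dξ = 1/(2σ(κ+σ)^j). (Here the integrand equals φ̂'_l(ξ,σ) times the conjugate of φ̂'_l(ξ,σ) times (κ+iξ)^{−j}, for any l.) -/

import Mathlib

/-!
Since `(σ + iξ)(σ - iξ) = σ² + ξ²`, the case `j = 0` is `∫ 1/(σ² + ξ²) = π/σ`. Because
`(σ - iξ) + (κ + iξ) = κ + σ` does not depend on `ξ`, partial fractions give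
`1/(ABCʲ⁺¹) = (1/(ABCʲ) + 1/(ACʲ⁺¹))/(κ + σ)` with `A = σ + iξ`, `B = σ - iξ`, `C = κ + iξ`, and
the integral of `1/(ACʲ⁺¹)` vanishes: both of its poles lie in the upper half-plane. Without
contour integration this is seen from explicit antiderivatives vanishing at `±∞`, namely
`(a + iξ)^{-n-1}` and, for the simple-pole case, `log((a + iξ)/(b + iξ))`, which is well defined
because a quotient of two numbers with positive real part is never a non-positive real.
-/

open MeasureTheory Complex Filter Topology

lemma add_I_mul_ne_zero {a : ℂ} (ha : a.re ≠ 0) (ξ : ℝ) : a + I * ξ ≠ 0 :=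
  fun h => ha (by simpa using congrArg re h)

lemma norm_add_I_mul_sq (a : ℂ) (ξ : ℝ) : ‖a + I * ξ‖ ^ 2 = a.re ^ 2 + (ξ + a.im) ^ 2 := by
  rw [Complex.sq_norm, normSq_apply]
  simp only [add_re, mul_re, add_im, mul_im, I_re, I_im, ofReal_re, ofReal_im]
  ring

lemma norm_inv_add_I_mul_le {a : ℂ} (ha : a.re ≠ 0) (ξ : ℝ) : ‖(a + I * ξ)⁻¹‖ ≤ |a.re|⁻¹ := by
  rw [norm_inv]
  exact inv_anti₀ (abs_pos.mpr ha) (by simpa using abs_re_le_norm (a + I * ξ))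

lemma integrable_inv_sq_add_sq {c : ℝ} (hc : c ≠ 0) (d : ℝ) :
    Integrable fun ξ : ℝ => (c ^ 2 + (ξ + d) ^ 2)⁻¹ := by
  have h := ((integrable_inv_one_add_sq.comp_mul_left' (inv_ne_zero hc)).comp_add_right
    d).const_mul (c⁻¹ ^ 2)
  refine h.congr (Eventually.of_forall fun ξ => ?_)
  field_simp

lemma integral_univ_inv_sq_add_sq {c : ℝ} (hc : 0 < c) :
    ∫ ξ : ℝ, (c ^ 2 + ξ ^ 2)⁻¹ = Real.pi / c := by
  have h : ∀ ξ : ℝ, (c ^ 2 + ξ ^ 2)⁻¹ = c⁻¹ ^ 2 * (1 + (c⁻¹ * ξ) ^ 2)⁻¹ := fun ξ => by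
    field_simp
  simp_rw [h]
  rw [integral_const_mul, Measure.integral_comp_mul_left (fun u : ℝ => (1 + u ^ 2)⁻¹),
    integral_univ_inv_one_add_sq, inv_inv, abs_of_pos hc, smul_eq_mul]
  field_simp

lemma integrable_norm_inv_add_I_mul_sq {a : ℂ} (ha : a.re ≠ 0) :
    Integrable fun ξ : ℝ => ‖(a + I * ξ)⁻¹‖ ^ 2 := by
  simp_rw [norm_inv, inv_pow, norm_add_I_mul_sq]
  exact integrable_inv_sq_add_sq ha a.im

lemma integrable_inv_mul_inv_pow {a b : ℂ} (ha : a.re ≠ 0) (hb : b.re ≠ 0) (n : ℕ) :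
    Integrable fun ξ : ℝ => ((a + I * ξ) * (b + I * ξ) ^ (n + 1))⁻¹ := by
  refine (((integrable_norm_inv_add_I_mul_sq ha).add
    (integrable_norm_inv_add_I_mul_sq hb)).const_mul (|b.re|⁻¹ ^ n)).mono' (by fun_prop)
    (Eventually.of_forall fun ξ => ?_)
  have hx := norm_nonneg (a + I * ξ)⁻¹
  have hy := norm_nonneg (b + I * ξ)⁻¹
  calc ‖((a + I * ξ) * (b + I * ξ) ^ (n + 1))⁻¹‖
      = ‖(b + I * ξ)⁻¹‖ ^ n * (‖(a + I * ξ)⁻¹‖ * ‖(b + I * ξ)⁻¹‖) := by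
        rw [mul_inv, norm_mul, ← inv_pow, norm_pow, pow_succ]; ring
    _ ≤ |b.re|⁻¹ ^ n * (‖(a + I * ξ)⁻¹‖ ^ 2 + ‖(b + I * ξ)⁻¹‖ ^ 2) := by
        gcongr
        · exact norm_inv_add_I_mul_le hb ξ
        · nlinarith [sq_nonneg (‖(a + I * ξ)⁻¹‖ - ‖(b + I * ξ)⁻¹‖)]

lemma tendsto_inv_add_I_mul_cocompact (b : ℂ) :
    Tendsto (fun ξ : ℝ => (b + I * ξ)⁻¹) (cocompact ℝ) (𝓝 0) := by
  refine tendsto_inv₀_cobounded.comp (tendsto_norm_atTop_iff_cobounded.mp ?_)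
  refine tendsto_atTop_mono (fun ξ => ?_)
    (tendsto_atTop_add_const_right _ (-‖b‖) (tendsto_norm_cocompact_atTop (E := ℝ)))
  have h := norm_sub_norm_le (I * (ξ : ℂ)) (-b)
  simp only [sub_neg_eq_add, norm_neg, norm_mul, norm_I, one_mul, norm_real] at h
  rw [add_comm] at h
  simp only [Real.norm_eq_abs] at *
  linarith

lemma integral_eq_zero_of_hasDerivAt_of_tendsto_cocompact {E : Type*} [NormedAddCommGroup E]
    [NormedSpace ℝ E] [CompleteSpace E] {F f : ℝ → E} {c : E} (hF : ∀ x, HasDerivAt F (f x) x)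
    (hf : Integrable f) (hc : Tendsto F (cocompact ℝ) (𝓝 c)) :
    ∫ x, f x = 0 := by
  simpa using integral_of_hasDerivAt_of_tendsto hF hf (hc.mono_left atBot_le_cocompact)
    (hc.mono_left atTop_le_cocompact)

lemma hasDerivAt_add_I_mul (b : ℂ) (ξ : ℝ) : HasDerivAt (fun t : ℝ => b + I * t) I ξ := by
  simpa using (((hasDerivAt_id (ξ : ℂ)).const_mul I).const_add b).comp_ofReal

lemma integral_inv_add_I_mul_pow_eq_zero {b : ℂ} (hb : 0 < b.re) (n : ℕ) :
    ∫ ξ : ℝ, ((b + I * ξ) ^ (n + 2))⁻¹ = 0 := by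
  refine integral_eq_zero_of_hasDerivAt_of_tendsto_cocompact (c := 0)
    (F := fun ξ : ℝ => I / (n + 1) * ((b + I * ξ)⁻¹) ^ (n + 1)) (fun ξ => ?_)
    (by simpa [← pow_succ'] using integrable_inv_mul_inv_pow hb.ne' hb.ne' n) ?_
  · have hne := add_I_mul_ne_zero hb.ne' ξ
    refine ((((hasDerivAt_add_I_mul b ξ).inv hne).pow (n + 1)).const_mul
      (I / (n + 1))).congr_deriv ?_
    simp only [Pi.inv_apply, Nat.add_sub_cancel, inv_pow]
    push_cast
    field_simp
    linear_combination (-(b + I * ξ) ^ (n + 2)) * I_sq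
  · simpa using ((tendsto_inv_add_I_mul_cocompact b).pow (n + 1)).const_mul (I / (n + 1))

lemma div_mem_slitPlane {z w : ℂ} (hz : 0 < z.re) (hw : 0 < w.re) : z / w ∈ slitPlane := by
  rw [mem_slitPlane_iff]
  by_contra! h
  have hw0 : w ≠ 0 := fun h => by simp [h] at hw
  have hq : z / w = ((z / w).re : ℂ) := ext rfl (by simp [h.2])
  have hre : z.re = (z / w).re * w.re := by
    rw [← re_ofReal_mul, ← hq, div_mul_cancel₀ z hw0]
  nlinarith [h.1]

lemma integral_inv_mul_inv_eq_zero {a b : ℂ} (ha : 0 < a.re) (hb : 0 < b.re) (hab : a ≠ b) :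
    ∫ ξ : ℝ, ((a + I * ξ) * (b + I * ξ))⁻¹ = 0 := by
  have hba : I * (b - a) ≠ 0 := mul_ne_zero I_ne_zero (sub_ne_zero.mpr hab.symm)
  refine integral_eq_zero_of_hasDerivAt_of_tendsto_cocompact (c := (I * (b - a))⁻¹ * log 1)
    (F := fun ξ : ℝ => (I * (b - a))⁻¹ * log ((a + I * ξ) / (b + I * ξ))) (fun ξ => ?_)
    (by simpa using integrable_inv_mul_inv_pow ha.ne' hb.ne' 0) ?_
  · have hA := add_I_mul_ne_zero ha.ne' ξ
    have hB := add_I_mul_ne_zero hb.ne' ξ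
    refine ((((hasDerivAt_add_I_mul a ξ).div (hasDerivAt_add_I_mul b ξ) hB).clog_real
      (div_mem_slitPlane (by simpa using ha) (by simpa using hb))).const_mul
      (I * (b - a))⁻¹).congr_deriv ?_
    simp only [Pi.div_apply]
    field_simp
    ring
  · refine (((continuousAt_clog one_mem_slitPlane).tendsto.comp ?_)).const_mul _
    have h := ((tendsto_inv_add_I_mul_cocompact b).const_mul (a - b)).const_add 1
    rw [mul_zero, add_zero] at h
    refine h.congr' (Eventually.of_forall fun ξ => ?_)
    have hB := add_I_mul_ne_zero hb.ne' ξ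
    field_simp
    ring

lemma inv_mul_pow_succ_succ {K : Type*} [Field K] {A C : K} (hA : A ≠ 0) (hC : C ≠ 0)
    (hCA : C - A ≠ 0) (n : ℕ) :
    (A * C ^ (n + 2))⁻¹ = (C - A)⁻¹ * ((A * C ^ (n + 1))⁻¹ - (C ^ (n + 2))⁻¹) := by
  field_simp
  ring

lemma integral_inv_mul_inv_pow_eq_zero {a b : ℂ} (ha : 0 < a.re) (hb : 0 < b.re) (n : ℕ) :
    ∫ ξ : ℝ, ((a + I * ξ) * (b + I * ξ) ^ (n + 1))⁻¹ = 0 := by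
  rcases eq_or_ne a b with rfl | hab
  · simpa only [← pow_succ'] using integral_inv_add_I_mul_pow_eq_zero ha n
  induction n with
  | zero => simpa using integral_inv_mul_inv_eq_zero ha hb hab
  | succ n ih =>
    have hsplit (ξ : ℝ) := inv_mul_pow_succ_succ (add_I_mul_ne_zero ha.ne' ξ)
      (add_I_mul_ne_zero hb.ne' ξ) (by simpa [sub_eq_zero] using hab.symm) n
    simp_rw [hsplit, add_sub_add_right_eq_sub]
    rw [integral_const_mul, integral_sub (integrable_inv_mul_inv_pow ha.ne' hb.ne' n)
      (by simpa only [← pow_succ'] using integrable_inv_mul_inv_pow hb.ne' hb.ne' n), ih,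
      integral_inv_add_I_mul_pow_eq_zero hb, sub_zero, mul_zero]

lemma add_I_mul_mul_sub_I_mul (σ ξ : ℝ) :
    ((σ : ℂ) + I * ξ) * ((σ : ℂ) - I * ξ) = (σ ^ 2 + ξ ^ 2 : ℝ) := by
  push_cast
  linear_combination -(ξ : ℂ) ^ 2 * I_sq

lemma inv_mul_mul_pow_succ {K : Type*} [Field K] {A B C : K} (hA : A ≠ 0) (hB : B ≠ 0)
    (hC : C ≠ 0) (hBC : B + C ≠ 0) (j : ℕ) :
    (A * B * C ^ (j + 1))⁻¹ = (B + C)⁻¹ * ((A * B * C ^ j)⁻¹ + (A * C ^ (j + 1))⁻¹) := by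
  field_simp
  ring

lemma inv_mul_mul_pow_succ_add_I_mul {σ : ℝ} (hσ : 0 < σ) {κ : ℂ} (hκ : 0 < κ.re) (j : ℕ)
    (ξ : ℝ) :
    (((σ : ℂ) + I * ξ) * ((σ : ℂ) - I * ξ) * (κ + I * ξ) ^ (j + 1))⁻¹ =
      (κ + σ)⁻¹ * ((((σ : ℂ) + I * ξ) * ((σ : ℂ) - I * ξ) * (κ + I * ξ) ^ j)⁻¹ +
        (((σ : ℂ) + I * ξ) * (κ + I * ξ) ^ (j + 1))⁻¹) := by
  have h := inv_mul_mul_pow_succ (add_I_mul_ne_zero (a := σ) (by simpa using hσ.ne') ξ)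
    (B := (σ : ℂ) - I * ξ) (ne_zero_of_re_pos (by simpa using hσ)) (add_I_mul_ne_zero hκ.ne' ξ)
    (ne_zero_of_re_pos (by simpa using add_pos hσ hκ)) j
  rwa [show (σ : ℂ) - I * ξ + (κ + I * ξ) = κ + σ by ring] at h

lemma integrable_inv_mul_mul_pow {σ : ℝ} (hσ : 0 < σ) {κ : ℂ} (hκ : 0 < κ.re) (j : ℕ) :
    Integrable fun ξ : ℝ => (((σ : ℂ) + I * ξ) * ((σ : ℂ) - I * ξ) * (κ + I * ξ) ^ j)⁻¹ := by
  induction j with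
  | zero =>
    simp_rw [pow_zero, mul_one, add_I_mul_mul_sub_I_mul, ← ofReal_inv]
    simpa using (integrable_inv_sq_add_sq hσ.ne' 0).ofReal (𝕜 := ℂ)
  | succ j ih =>
    simp_rw [inv_mul_mul_pow_succ_add_I_mul hσ hκ]
    exact (ih.add (integrable_inv_mul_inv_pow (by simpa using hσ.ne') hκ.ne' j)).const_mul _

lemma integral_inv_mul_mul_pow {σ : ℝ} (hσ : 0 < σ) {κ : ℂ} (hκ : 0 < κ.re) (j : ℕ) :
    ∫ ξ : ℝ, (((σ : ℂ) + I * ξ) * ((σ : ℂ) - I * ξ) * (κ + I * ξ) ^ j)⁻¹ =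
      Real.pi / σ / (κ + σ) ^ j := by
  induction j with
  | zero =>
    simp_rw [pow_zero, mul_one, div_one, add_I_mul_mul_sub_I_mul, ← ofReal_inv]
    rw [integral_complex_ofReal, integral_univ_inv_sq_add_sq hσ, ofReal_div]
  | succ j ih =>
    simp_rw [inv_mul_mul_pow_succ_add_I_mul hσ hκ]
    rw [integral_const_mul, integral_add (integrable_inv_mul_mul_pow hσ hκ j)
      (integrable_inv_mul_inv_pow (by simpa using hσ.ne') hκ.ne' j), ih,
      integral_inv_mul_inv_pow_eq_zero (by simpa using hσ) hκ, add_zero, pow_succ]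
    field_simp

theorem laguerre_diagonal_integral_general (j : ℕ)
    (σ : ℝ) (hσ : 0 < σ) (κ : ℂ) (hκ : 0 < κ.re) :
    (1 / (2 * (Real.pi : ℂ))) *
      ∫ ξ : ℝ, 1 / (((σ : ℂ) + I * ξ) * ((σ : ℂ) - I * ξ) * (κ + I * ξ) ^ j) =
    1 / (2 * (σ : ℂ) * (κ + (σ : ℂ)) ^ j) := by
  have hκσ : κ + σ ≠ 0 := ne_zero_of_re_pos (by simpa using add_pos hκ hσ)
  simp_rw [one_div, integral_inv_mul_mul_pow hσ hκ j]
  field_simp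

/-- Lemma 5.2, case `m = l`: the integral of `φ̂'_l` times its conjugate times `(κ+iξ)^{-j}`,
which equals `1/((σ+iξ)(σ-iξ)(κ+iξ)^j)` independently of `l`. -/
theorem laguerre_diagonal_integral (l : ℕ) (j : ℕ) (hj : 1 ≤ j)
    (σ : ℝ) (hσ : 0 < σ) (κ : ℂ) (hκ : 0 < κ.re) :
    (1 / (2 * (Real.pi : ℂ))) *
      ∫ ξ : ℝ, 1 / (((σ : ℂ) + I * ξ) * ((σ : ℂ) - I * ξ) * (κ + I * ξ) ^ j) =
    1 / (2 * (σ : ℂ) * (κ + (σ : ℂ)) ^ j) :=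
  laguerre_diagonal_integral_general j σ hσ κ hκ
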